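/- Let G be a complete multipartite graph and H any finite simple graph. Then π(H) + (π(G) − 1)·|V(H)| ≤ π(G ∘ H). -/

import Mathlib

/-- A list is a repetition if it is of the form `w ++ w` for a nonempty `w`. -/
def IsRepetition {α : Type*} (l : List α) : Prop := ∃ w : List α, w ≠ [] ∧ l = w ++ w

/-- A list is non-repetitive if no block of consecutive elements is a repetition. -/
def NonRepetitive {α : Type*} (l : List α) : Prop :=
  ∀ t : List α, t <:+: l → ¬ IsRepetition t

/-- A vertex colouring is non-repetitive if the colour sequence of every path
is not a repetition. -/
def NonRepColoring {V β : Type*} (G : SimpleGraph V) (φ : V → β) : Prop :=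
  ∀ ⦃u v : V⦄ (p : G.Walk u v), p.IsPath → ¬ IsRepetition (p.support.map φ)

/-- The Thue chromatic number: minimum number of colours of a non-repetitive colouring. -/
noncomputable def thueNumber {V : Type*} [Fintype V] (G : SimpleGraph V) : ℕ :=
  sInf {k | ∃ φ : V → Fin k, NonRepColoring G φ}

/-- The Thue choice number: least `k` such that from any lists of size at least `k`
one can choose a non-repetitive colouring. -/
noncomputable def thueChoiceNumber {V : Type*} [Fintype V] (G : SimpleGraph V) : ℕ :=
  sInf {k | ∀ L : V → Finset ℕ, (∀ v, k ≤ (L v).card) →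
    ∃ φ : V → ℕ, (∀ v, φ v ∈ L v) ∧ NonRepColoring G φ}

/-- The independence number of a graph. -/
noncomputable def indepNum {V : Type*} [Fintype V] (G : SimpleGraph V) : ℕ :=
  sSup {n | ∃ s : Finset V, (∀ a ∈ s, ∀ b ∈ s, ¬ G.Adj a b) ∧ s.card = n}

/-- The lexicographic product of two simple graphs. -/
def lexProd {V W : Type*} (G : SimpleGraph V) (H : SimpleGraph W) : SimpleGraph (V × W) where
  Adj x y := G.Adj x.1 y.1 ∨ (x.1 = y.1 ∧ H.Adj x.2 y.2)
  symm := by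
    refine ⟨?_⟩
    rintro x y (h | ⟨h1, h2⟩)
    · exact Or.inl h.symm
    · exact Or.inr ⟨h1.symm, h2.symm⟩
  loopless := by
    refine ⟨?_⟩
    rintro x (h | ⟨h1, h2⟩)
    · exact G.loopless.irrefl _ h
    · exact H.loopless.irrefl _ h2

/-!
Let `c` be an optimal non-repetitive colouring of `G ∘ H`, where `G` has parts `V i`. Vertices
over distinct parts are adjacent, so they get distinct colours. If two parts `i ≠ j` both
contained a repeated colour, `c x = c y` over `i` and `c z = c t` over `j`, the path `x z y t`
would be repetitive. Hence `c` is injective away from the fibre over a single part `i₀`, which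
accounts for `|V(G) \ V i₀| · |V(H)|` colours, and a copy of `H` over `i₀` needs at least `π(H)`
further colours. Finally `π(G) ≤ |V(G) \ V i₀| + 1`: give all of `V i₀` one colour and every
other vertex a colour of its own.
-/

open Function SimpleGraph

lemma IsRepetition.map {α β : Type*} (f : α → β) {l : List α} (h : IsRepetition l) :
    IsRepetition (l.map f) := by
  obtain ⟨w, hw, rfl⟩ := h
  exact ⟨w.map f, by simpa using hw, by simp⟩

lemma IsRepetition.exists_ne_getElem_eq {α : Type*} {l : List α} (h : IsRepetition l)
    {i : ℕ} (hi : i < l.length) : ∃ j, ∃ hj : j < l.length, j ≠ i ∧ l[j] = l[i] := by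
  obtain ⟨w, hw, rfl⟩ := h
  have hn : 0 < w.length := List.length_pos_iff.mpr hw
  simp only [List.length_append] at hi
  rcases lt_or_ge i w.length with hiw | hiw
  · refine ⟨i + w.length, by simp; omega, by omega, ?_⟩
    rw [List.getElem_append_right (by omega), List.getElem_append_left hiw]
    simp
  · refine ⟨i - w.length, by simp; omega, by omega, ?_⟩
    rw [List.getElem_append_left (by omega), List.getElem_append_right hiw]

namespace NonRepColoring

variable {V β : Type*} {G : SimpleGraph V} {φ : V → β}

lemma of_comp {γ : Type*} (f : β → γ) (h : NonRepColoring G (f ∘ φ)) :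
    NonRepColoring G φ := fun _ _ p hp hrep =>
  h p hp (by simpa [List.map_map] using hrep.map f)

lemma comp_hom {U : Type*} {H : SimpleGraph U} (h : NonRepColoring G φ) (f : H →g G)
    (hf : Injective f) : NonRepColoring H (φ ∘ f) := fun _ _ p hp hrep =>
  h (p.map f) (hp.map hf) (by simpa [Walk.support_map, List.map_map] using hrep)

lemma ne_of_adj (h : NonRepColoring G φ) {a b : V} (hab : G.Adj a b) : φ a ≠ φ b := fun he =>
  h hab.toWalk (by simp [Walk.isPath_def, hab.ne]) ⟨[φ a], by simp, by simp [he]⟩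

lemma ne_of_alternating (h : NonRepColoring G φ) {a b c d : V} (hab : G.Adj a b)
    (hbc : G.Adj b c) (hcd : G.Adj c d) (hac : a ≠ c) (had : a ≠ d) (hbd : b ≠ d)
    (hφac : φ a = φ c) : φ b ≠ φ d := fun hφbd => by
  let p : G.Walk a d := .cons hab (.cons hbc (.cons hcd .nil))
  have hp : p.IsPath := by
    simp [p, Walk.isPath_def, hab.ne, hbc.ne, hcd.ne, hac, had, hbd]
  exact h p hp ⟨[φ a, φ b], by simp, by simp [p, hφac, hφbd]⟩

end NonRepColoring

/-- Every vertex of a repetitive path shares its colour with another vertex of the path, so it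
lies in `S`; but the path has an edge and `S` is independent. -/
lemma nonRepColoring_of_isIndepSet {V β : Type*} {G : SimpleGraph V} {φ : V → β} {S : Set V}
    (hS : G.IsIndepSet S) (hφ : ∀ ⦃a b⦄, a ∉ S → φ a = φ b → a = b) : NonRepColoring G φ := by
  intro u v p hp hrep
  have hsupp : ∀ x ∈ p.support, x ∈ S := by
    intro x hx
    obtain ⟨i, hi, rfl⟩ := List.getElem_of_mem hx
    obtain ⟨j, hj, hji, hφji⟩ := hrep.exists_ne_getElem_eq (by simpa using hi)
    simp only [List.getElem_map] at hφji
    by_contra hxS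
    exact hji ((hp.support_nodup.getElem_inj_iff).mp (hφ hxS hφji.symm).symm)
  cases p with
  | nil =>
    obtain ⟨w, hw, hl⟩ := hrep
    have := congrArg List.length hl
    simp only [Walk.support_nil, List.map_cons, List.map_nil, List.length_cons, List.length_nil,
      List.length_append] at this
    omega
  | cons hadj q =>
    exact hS (hsupp _ (by simp)) (hsupp _ (by simp [q.start_mem_support])) hadj.ne hadj

lemma nonRepColoring_of_injective {V β : Type*} {G : SimpleGraph V} {φ : V → β}
    (hφ : Injective φ) : NonRepColoring G φ :=
  nonRepColoring_of_isIndepSet (S := ∅) (by simp) fun _ _ _ h => hφ h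

section ThueNumber

variable {V : Type*} [Fintype V] {G : SimpleGraph V}

lemma exists_nonRepColoring_fin_thueNumber (G : SimpleGraph V) :
    ∃ φ : V → Fin (thueNumber G), NonRepColoring G φ :=
  Nat.sInf_mem (s := {k | ∃ φ : V → Fin k, NonRepColoring G φ})
    ⟨Fintype.card V, Fintype.equivFin V, nonRepColoring_of_injective (Fintype.equivFin V).injective⟩

lemma thueNumber_le_card {β : Type*} [Finite β] {φ : V → β} (h : NonRepColoring G φ) :
    thueNumber G ≤ Nat.card β :=
  Nat.sInf_le ⟨Finite.equivFin β ∘ φ,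
    .of_comp (Finite.equivFin β).symm (by simpa [Function.comp_def] using h)⟩

lemma thueNumber_le_ncard_range {β : Type*} {φ : V → β} (h : NonRepColoring G φ) :
    thueNumber G ≤ (Set.range φ).ncard :=
  thueNumber_le_card (φ := Set.rangeFactorization φ) (h.of_comp Subtype.val)

lemma thueNumber_le_ncard_compl_add_one {S : Set V} (hS : G.IsIndepSet S) :
    thueNumber G ≤ Sᶜ.ncard + 1 := by
  classical
  let φ : V → Option ↥Sᶜ := fun v => if hv : v ∈ S then none else some ⟨v, hv⟩
  have hφ : NonRepColoring G φ := nonRepColoring_of_isIndepSet hS fun a b ha hab => by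
    by_cases hb : b ∈ S <;> simp [φ, ha, hb] at hab
    exact hab
  simpa only [Finite.card_option, Nat.card_coe_set_eq] using thueNumber_le_card hφ

end ThueNumber

section Multipartite

variable {α ι β : Type*} {G : SimpleGraph α} {part : α → ι} {c : α → β}

lemma NonRepColoring.injOn_fiber_or_injOn_fiber (hc : NonRepColoring G c)
    (hpart : ∀ a b, part a ≠ part b → G.Adj a b) {i j : ι} (hij : i ≠ j) :
    Set.InjOn c (part ⁻¹' {i}) ∨ Set.InjOn c (part ⁻¹' {j}) := by
  by_contra h
  simp only [not_or, Set.InjOn, not_forall, exists_prop] at h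
  obtain ⟨⟨x, hx, y, hy, hxy, hne⟩, ⟨z, hz, t, ht, hzt, hzt'⟩⟩ := h
  simp only [Set.mem_preimage, Set.mem_singleton_iff] at hx hy hz ht
  have adj : ∀ {a b}, part a = i → part b = j → G.Adj a b := fun ha hb =>
    hpart _ _ (by rw [ha, hb]; exact hij)
  have ne : ∀ {a b}, part a = i → part b = j → a ≠ b := fun ha hb hab =>
    hij (by rw [← ha, ← hb, hab])
  exact hc.ne_of_alternating (adj hx hz) (adj hy hz).symm (adj hy ht) hne (ne hx ht) hzt'
    hxy hzt

lemma NonRepColoring.injOn_part_ne (hc : NonRepColoring G c)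
    (hpart : ∀ a b, part a ≠ part b → G.Adj a b) {i₀ : ι}
    (hfib : ∀ j ≠ i₀, Set.InjOn c (part ⁻¹' {j})) : Set.InjOn c {a | part a ≠ i₀} := by
  intro a ha b hb hab
  by_cases hp : part a = part b
  · exact hfib _ ha rfl hp.symm hab
  · exact absurd hab (hc.ne_of_adj (hpart a b hp))

lemma NonRepColoring.ncard_part_ne_add_ncard_image_le [Finite β] (hc : NonRepColoring G c)
    (hpart : ∀ a b, part a ≠ part b → G.Adj a b) {i₀ : ι}
    (hinj : Set.InjOn c {a | part a ≠ i₀}) {s : Set α} (hs : ∀ a ∈ s, part a = i₀) :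
    {a | part a ≠ i₀}.ncard + (c '' s).ncard ≤ Nat.card β := by
  have hdisj : Disjoint (c '' {a | part a ≠ i₀}) (c '' s) := by
    rw [Set.disjoint_left]
    rintro _ ⟨a, ha, rfl⟩ ⟨b, hb, hab⟩
    exact hc.ne_of_adj (hpart a b (by rw [hs b hb]; exact ha)) hab.symm
  rw [← hinj.ncard_image, ← Set.ncard_union_eq hdisj, ← Set.ncard_univ]
  exact Set.ncard_le_ncard (Set.subset_univ _)

end Multipartite

def lexProdFiber {V W : Type*} (G : SimpleGraph V) (H : SimpleGraph W) (u : V) :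
    H →g lexProd G H :=
  ⟨Prod.mk u, fun h => Or.inr ⟨rfl, h⟩⟩

lemma lexProd_completeMultipartiteGraph_adj_of_ne {ι : Type*} {V : ι → Type*} {W : Type*}
    {H : SimpleGraph W} {x y : (Σ i, V i) × W} (h : x.1.1 ≠ y.1.1) :
    (lexProd (completeMultipartiteGraph V) H).Adj x y :=
  Or.inl h

lemma exists_nonempty_injOn_lexProd_completeMultipartite {ι : Type*} {V : ι → Type*}
    [Nonempty (Σ i, V i)] {W β : Type*} {H : SimpleGraph W} {c : (Σ i, V i) × W → β}
    (hc : NonRepColoring (lexProd (completeMultipartiteGraph V) H) c) :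
    ∃ i₀, Nonempty (V i₀) ∧ Set.InjOn c {x | x.1.1 ≠ i₀} := by
  have hpart : ∀ x y : (Σ i, V i) × W, x.1.1 ≠ y.1.1 → _ :=
    fun _ _ => lexProd_completeMultipartiteGraph_adj_of_ne (H := H)
  by_cases h : ∃ i, ¬ Set.InjOn c ((·.1.1) ⁻¹' {i})
  · obtain ⟨i, hi⟩ := h
    obtain ⟨x, hx : x.1.1 = i, -⟩ :=
      Set.not_subsingleton_iff.mp fun hs => hi (hs.injOn c)
    refine ⟨i, ⟨hx ▸ x.1.2⟩, hc.injOn_part_ne hpart fun j hj => ?_⟩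
    exact (hc.injOn_fiber_or_injOn_fiber hpart hj).resolve_right hi
  · simp only [not_exists, not_not] at h
    obtain ⟨v₀⟩ := ‹Nonempty (Σ i, V i)›
    exact ⟨v₀.1, ⟨v₀.2⟩, hc.injOn_part_ne hpart fun j _ => h j⟩

/-- Lower bound for the Thue chromatic number of the lexicographic product of
a complete multipartite graph with an arbitrary graph. -/
theorem thueNumber_lexProd_completeMultipartite_lower {ι : Type*} [Fintype ι]
    (V : ι → Type*) [∀ i, Fintype (V i)] [Nonempty (Σ i, V i)]
    {W : Type*} [Fintype W] (H : SimpleGraph W) :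
    thueNumber H + (thueNumber (SimpleGraph.completeMultipartiteGraph V) - 1) * Fintype.card W ≤
      thueNumber (lexProd (SimpleGraph.completeMultipartiteGraph V) H) := by
  set G := completeMultipartiteGraph V
  obtain ⟨c, hc⟩ := exists_nonRepColoring_fin_thueNumber (lexProd G H)
  obtain ⟨i₀, ⟨a₀⟩, hinj⟩ := exists_nonempty_injOn_lexProd_completeMultipartite hc
  let u₀ : Σ i, V i := ⟨i₀, a₀⟩
  have hG : thueNumber G ≤ {u : Σ i, V i | u.1 ≠ i₀}.ncard + 1 :=
    thueNumber_le_ncard_compl_add_one <|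
      (completeMultipartiteGraph.coloring V).isIndepSet_colorClass i₀
  have hH : thueNumber H ≤ (Set.range (c ∘ lexProdFiber G H u₀)).ncard :=
    thueNumber_le_ncard_range (hc.comp_hom _ (Prod.mk_right_injective u₀))
  have hcount := hc.ncard_part_ne_add_ncard_image_le (part := (·.1.1))
    (fun _ _ => lexProd_completeMultipartiteGraph_adj_of_ne) hinj
    (s := Set.range (lexProdFiber G H u₀)) (by rintro _ ⟨w, rfl⟩; rfl)
  have hprod : {x : (Σ i, V i) × W | x.1.1 ≠ i₀} = {u | u.1 ≠ i₀} ×ˢ Set.univ := by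
    ext; simp
  rw [hprod, Set.ncard_prod, Set.ncard_univ, ← Set.range_comp, Nat.card_eq_fintype_card,
    Nat.card_eq_fintype_card, Fintype.card_fin] at hcount
  calc thueNumber H + (thueNumber G - 1) * Fintype.card W
      ≤ (Set.range (c ∘ lexProdFiber G H u₀)).ncard
          + {u : Σ i, V i | u.1 ≠ i₀}.ncard * Fintype.card W := by gcongr; omega
    _ ≤ thueNumber (lexProd G H) := by omega
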